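/- Let N, m, ℓ be natural numbers with 3 ≤ ℓ, let F be a field satisfying ringChar F = 0 or ℓ + 2 ≤ ringChar F, and let Cl : Fin m → Fin 3 → (Fin N × Bool) encode a 3-CNF formula in which the three variables of each clause are pairwise distinct. If a finset S : Finset I satisfies φ_ℓ(S) = t, then: (i) Sum.inl k ∈ S for every k : Fin ℓ; (ii) for every i : Fin N, exactly one of the two memberships Sum.inr (Sum.inl (i, true)) ∈ S and Sum.inr (Sum.inl (i, false)) ∈ S holds; and (iii) for every j : Fin m there exists k : Fin 3 with Sum.inr (Sum.inl (Cl j k)) ∈ S. -/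
import Mathlib


open Finset

/-- The first coordinate of the Subset-φ instance. -/
def coord0 (N m : ℕ) : Fin (1 + N + m) := ⟨0, by omega⟩

/-- The coordinate of variable `x_i`. -/
def coordVar (N m : ℕ) (i : Fin N) : Fin (1 + N + m) :=
  ⟨1 + i.val, by have := i.isLt; omega⟩

/-- The coordinate of clause `C_j`. -/
def coordCl (N m : ℕ) (j : Fin m) : Fin (1 + N + m) :=
  ⟨1 + N + j.val, by have := j.isLt; omega⟩

/-- The elements of the Subset-`φ_ℓ` instance constructed from a 3-CNF formula `Cl`. -/
def subsetPhiElem (F : Type*) [Field F] (N m ℓ : ℕ)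
    (Cl : Fin m → Fin 3 → (Fin N × Bool)) :
    (Fin ℓ ⊕ ((Fin N × Bool) ⊕ (Fin m × Fin (ℓ - 1)))) → Fin (1 + N + m) → F
  | Sum.inl k, c =>
      if c = coord0 N m then 1
      else if k.val ≠ 0 ∧ ∃ i : Fin N, c = coordVar N m i then 1
      else 0
  | Sum.inr (Sum.inl (i, b)), c =>
      if c = coordVar N m i then 1
      else if ∃ j : Fin m, c = coordCl N m j ∧ ∃ k : Fin 3, Cl j k = (i, b) then 1
      else 0
  | Sum.inr (Sum.inr (j, _)), c =>
      if c = coordCl N m j then 1 else 0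

open scoped Classical

section helpers
variable {N m : ℕ}

lemma coordVar_inj {i i' : Fin N} (h : coordVar N m i = coordVar N m i') : i = i' := by
  simp only [coordVar, Fin.mk.injEq] at h; exact Fin.ext (by omega)

lemma coordCl_inj {j j' : Fin m} (h : coordCl N m j = coordCl N m j') : j = j' := by
  simp only [coordCl, Fin.mk.injEq] at h; exact Fin.ext (by omega)

lemma coordVar_ne_coord0 (i : Fin N) : coordVar N m i ≠ coord0 N m := by
  simp only [coordVar, coord0, ne_eq, Fin.mk.injEq]; omega

lemma coordCl_ne_coord0 (j : Fin m) : coordCl N m j ≠ coord0 N m := by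
  simp only [coordCl, coord0, ne_eq, Fin.mk.injEq]; omega

lemma coordCl_ne_coordVar (j : Fin m) (i : Fin N) : coordCl N m j ≠ coordVar N m i := by
  have := i.isLt
  simp only [coordCl, coordVar, ne_eq, Fin.mk.injEq]; omega

variable {F : Type*} [Field F] {ℓ : ℕ} {Cl : Fin m → Fin 3 → (Fin N × Bool)}

lemma eval_inl_coord0 (k : Fin ℓ) :
    subsetPhiElem F N m ℓ Cl (Sum.inl k) (coord0 N m) = 1 := by
  simp [subsetPhiElem]

lemma eval_lit_coord0 (i : Fin N) (b : Bool) :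
    subsetPhiElem F N m ℓ Cl (Sum.inr (Sum.inl (i, b))) (coord0 N m) = 0 := by
  simp only [subsetPhiElem]
  rw [if_neg (fun h => coordVar_ne_coord0 i h.symm), if_neg]
  rintro ⟨j, hj, -⟩
  exact coordCl_ne_coord0 j hj.symm

lemma eval_gad_coord0 (j : Fin m) (k' : Fin (ℓ - 1)) :
    subsetPhiElem F N m ℓ Cl (Sum.inr (Sum.inr (j, k'))) (coord0 N m) = 0 := by
  simp only [subsetPhiElem]
  rw [if_neg (fun h => coordCl_ne_coord0 j h.symm)]

lemma eval_inl_coordVar (k : Fin ℓ) (i : Fin N) :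
    subsetPhiElem F N m ℓ Cl (Sum.inl k) (coordVar N m i) =
      if k.val ≠ 0 then 1 else 0 := by
  simp only [subsetPhiElem]
  rw [if_neg (coordVar_ne_coord0 i)]
  by_cases h : k.val ≠ 0
  · rw [if_pos ⟨h, i, rfl⟩, if_pos h]
  · rw [if_neg (fun hc => h hc.1), if_neg h]

lemma eval_lit_coordVar (i' i : Fin N) (b : Bool) :
    subsetPhiElem F N m ℓ Cl (Sum.inr (Sum.inl (i', b))) (coordVar N m i) =
      if i' = i then 1 else 0 := by
  simp only [subsetPhiElem]
  by_cases h : i' = i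
  · subst h; rw [if_pos rfl, if_pos rfl]
  · rw [if_neg (fun hc => h (coordVar_inj hc).symm), if_neg, if_neg h]
    rintro ⟨j, hj, -⟩
    exact coordCl_ne_coordVar j i hj.symm

lemma eval_gad_coordVar (j : Fin m) (k' : Fin (ℓ - 1)) (i : Fin N) :
    subsetPhiElem F N m ℓ Cl (Sum.inr (Sum.inr (j, k'))) (coordVar N m i) = 0 := by
  simp only [subsetPhiElem]
  rw [if_neg (fun h => coordCl_ne_coordVar j i h.symm)]

lemma eval_inl_coordCl (k : Fin ℓ) (j : Fin m) :
    subsetPhiElem F N m ℓ Cl (Sum.inl k) (coordCl N m j) = 0 := by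
  simp only [subsetPhiElem]
  rw [if_neg (coordCl_ne_coord0 j), if_neg]
  rintro ⟨-, i, hi⟩
  exact coordCl_ne_coordVar j i hi

lemma eval_lit_coordCl (i : Fin N) (b : Bool) (j : Fin m) :
    subsetPhiElem F N m ℓ Cl (Sum.inr (Sum.inl (i, b))) (coordCl N m j) =
      if ∃ k : Fin 3, Cl j k = (i, b) then 1 else 0 := by
  simp only [subsetPhiElem]
  rw [if_neg (coordCl_ne_coordVar j i)]
  by_cases h : ∃ k : Fin 3, Cl j k = (i, b)
  · rw [if_pos ⟨j, rfl, h⟩, if_pos h]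
  · rw [if_neg, if_neg h]
    rintro ⟨j', hj', hk⟩
    exact h ((coordCl_inj hj') ▸ hk)

lemma eval_gad_coordCl (j' : Fin m) (k' : Fin (ℓ - 1)) (j : Fin m) :
    subsetPhiElem F N m ℓ Cl (Sum.inr (Sum.inr (j', k'))) (coordCl N m j) =
      if j' = j then 1 else 0 := by
  simp only [subsetPhiElem]
  by_cases h : j' = j
  · subst h; rw [if_pos rfl, if_pos rfl]
  · rw [if_neg (fun hc => h (coordCl_inj hc).symm), if_neg h]

end helpers

lemma sum_prod_eq_choose {ι : Type*} [DecidableEq ι] {F : Type*} [CommRing F]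
    (S : Finset ι) (v : ι → F) (hv : ∀ e ∈ S, v e = 0 ∨ v e = 1) (ℓ : ℕ) :
    ∑ T ∈ S.powersetCard ℓ, ∏ e ∈ T, v e
      = ((S.filter (fun e => v e = 1)).card.choose ℓ : F) := by
  classical
  set S1 := S.filter (fun e => v e = 1) with hS1
  have h1 : ∀ T ∈ S.powersetCard ℓ, ∏ e ∈ T, v e = if T ⊆ S1 then 1 else 0 := by
    intro T hT
    rw [Finset.mem_powersetCard] at hT
    by_cases h : T ⊆ S1
    · rw [if_pos h]
      exact Finset.prod_eq_one fun e he => (Finset.mem_filter.mp (h he)).2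
    · rw [if_neg h]
      obtain ⟨e, heT, he⟩ := Finset.not_subset.mp h
      refine Finset.prod_eq_zero heT ?_
      rcases hv e (hT.1 heT) with h0 | h1
      · exact h0
      · exact absurd (Finset.mem_filter.mpr ⟨hT.1 heT, h1⟩) he
  rw [Finset.sum_congr rfl h1, Finset.sum_boole]
  have h2 : (S.powersetCard ℓ).filter (fun T => T ⊆ S1) = S1.powersetCard ℓ := by
    ext T
    simp only [Finset.mem_filter, Finset.mem_powersetCard]
    constructor
    · rintro ⟨⟨-, hc⟩, hsub⟩; exact ⟨hsub, hc⟩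
    · rintro ⟨hsub, hc⟩; exact ⟨⟨hsub.trans (Finset.filter_subset _ _), hc⟩, hsub⟩
  rw [h2, Finset.card_powersetCard]

/-- Soundness of the Subset-`φ_ℓ` reduction (`ℓ ≥ 3`, `char F = 0` or `≥ ℓ + 2`): any
subset `S` whose `ℓ`-th elementary symmetric polynomial is the all-ones vector must
contain all the special elements `α_k`, exactly one literal element per variable, and
at least one literal element of every clause. -/
theorem subsetPhi_ell_soundness (N m ℓ : ℕ) (hℓ : 3 ≤ ℓ)
    (F : Type*) [Field F]
    (hchar : ringChar F = 0 ∨ ℓ + 2 ≤ ringChar F)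
    (Cl : Fin m → Fin 3 → (Fin N × Bool))
    (hdist : ∀ j : Fin m, ∀ k₁ k₂ : Fin 3, k₁ ≠ k₂ → (Cl j k₁).1 ≠ (Cl j k₂).1)
    (S : Finset (Fin ℓ ⊕ ((Fin N × Bool) ⊕ (Fin m × Fin (ℓ - 1)))))
    (hS : ∀ c : Fin (1 + N + m),
      ∑ T ∈ S.powersetCard ℓ, ∏ e ∈ T, subsetPhiElem F N m ℓ Cl e c = 1) :
    (∀ k : Fin ℓ, Sum.inl k ∈ S) ∧
    (∀ i : Fin N,
      Xor' (Sum.inr (Sum.inl (i, true)) ∈ S) (Sum.inr (Sum.inl (i, false)) ∈ S)) ∧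
    (∀ j : Fin m, ∃ k : Fin 3, Sum.inr (Sum.inl (Cl j k)) ∈ S) := by
  classical
  have hℓF : (ℓ : F) ≠ 0 := by
    intro h
    haveI := ringChar.charP F
    rw [CharP.cast_eq_zero_iff F (ringChar F) ℓ] at h
    rcases hchar with h0 | hp
    · rw [h0] at h; simp only [Nat.zero_dvd] at h; omega
    · have := Nat.le_of_dvd (by omega) h; omega
  have hv01 : ∀ (c : Fin (1 + N + m)) e, e ∈ S →
      subsetPhiElem F N m ℓ Cl e c = 0 ∨ subsetPhiElem F N m ℓ Cl e c = 1 := by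
    intro c e _
    obtain (k | ⟨i, b⟩ | ⟨j, k'⟩) := e <;>
      simp only [subsetPhiElem] <;> split_ifs <;> simp
  have key : ∀ c : Fin (1 + N + m),
      (((S.filter (fun e => subsetPhiElem F N m ℓ Cl e c = 1)).card.choose ℓ : ℕ) : F)
        = 1 := by
    intro c
    rw [← sum_prod_eq_choose S _ (hv01 c) ℓ]
    exact hS c
  have keyge : ∀ c : Fin (1 + N + m),
      ℓ ≤ (S.filter (fun e => subsetPhiElem F N m ℓ Cl e c = 1)).card := by
    intro c
    by_contra h
    push_neg at h
    have := key c
    rw [Nat.choose_eq_zero_of_lt h] at this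
    simp at this
  -- Part (i)
  have part1 : ∀ k : Fin ℓ, Sum.inl k ∈ S := by
    have hsub : S.filter (fun e => subsetPhiElem F N m ℓ Cl e (coord0 N m) = 1)
        ⊆ (Finset.univ : Finset (Fin ℓ)).image Sum.inl := by
      intro e he
      rw [Finset.mem_filter] at he
      obtain (k | ⟨i, b⟩ | ⟨j, k'⟩) := e
      · simp
      · rw [eval_lit_coord0] at he; exact absurd he.2 (by simp)
      · rw [eval_gad_coord0] at he; exact absurd he.2 (by simp)
    have himg : ((Finset.univ : Finset (Fin ℓ)).image
        (Sum.inl : Fin ℓ → Fin ℓ ⊕ ((Fin N × Bool) ⊕ (Fin m × Fin (ℓ - 1))))).card = ℓ := by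
      rw [Finset.card_image_of_injective _
        (Sum.inl_injective : Function.Injective
          (Sum.inl : Fin ℓ → Fin ℓ ⊕ ((Fin N × Bool) ⊕ (Fin m × Fin (ℓ - 1))))),
        Finset.card_univ, Fintype.card_fin]
    have heq := Finset.eq_of_subset_of_card_le hsub (by rw [himg]; exact keyge _)
    intro k
    have : Sum.inl k ∈ S.filter (fun e => subsetPhiElem F N m ℓ Cl e (coord0 N m) = 1) := by
      rw [heq]; simp
    exact (Finset.mem_filter.mp this).1
  refine ⟨part1, ?_, ?_⟩
  -- Part (ii)
  · intro i
    set x := (Sum.inr (Sum.inl (i, true)) :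
      Fin ℓ ⊕ ((Fin N × Bool) ⊕ (Fin m × Fin (ℓ - 1)))) with hxdef
    set y := (Sum.inr (Sum.inl (i, false)) :
      Fin ℓ ⊕ ((Fin N × Bool) ⊕ (Fin m × Fin (ℓ - 1)))) with hydef
    set P := S.filter (fun e => subsetPhiElem F N m ℓ Cl e (coordVar N m i) = 1) with hPdef
    set A := (Finset.univ.filter (fun k : Fin ℓ => k.val ≠ 0)).image
      (Sum.inl : Fin ℓ → Fin ℓ ⊕ ((Fin N × Bool) ⊕ (Fin m × Fin (ℓ - 1)))) with hAdef
    set B := S.filter (fun e => e = x ∨ e = y) with hBdef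
    have hPAB : P = A ∪ B := by
      ext e
      rw [hPdef, Finset.mem_filter, Finset.mem_union]
      constructor
      · rintro ⟨heS, hev⟩
        obtain (k | ⟨i', b⟩ | ⟨j, k'⟩) := e
        · left
          rw [eval_inl_coordVar] at hev
          rw [hAdef, Finset.mem_image]
          refine ⟨k, Finset.mem_filter.mpr ⟨Finset.mem_univ _, ?_⟩, rfl⟩
          intro h0
          rw [if_neg (by simpa using h0)] at hev
          exact zero_ne_one hev
        · right
          rw [eval_lit_coordVar] at hev
          have hii : i' = i := by
            by_contra h
            rw [if_neg h] at hev
            exact zero_ne_one hev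
          subst hii
          refine Finset.mem_filter.mpr ⟨heS, ?_⟩
          cases b
          · right; rfl
          · left; rfl
        · rw [eval_gad_coordVar] at hev
          exact absurd hev zero_ne_one
      · intro h
        rcases h with hA | hB
        · rw [hAdef, Finset.mem_image] at hA
          obtain ⟨k, hk, rfl⟩ := hA
          rw [Finset.mem_filter] at hk
          refine ⟨part1 k, ?_⟩
          rw [eval_inl_coordVar, if_pos hk.2]
        · rw [hBdef, Finset.mem_filter] at hB
          refine ⟨hB.1, ?_⟩
          rcases hB.2 with rfl | rfl
          · rw [hxdef, eval_lit_coordVar, if_pos rfl]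
          · rw [hydef, eval_lit_coordVar, if_pos rfl]
    have hdisj : Disjoint A B := by
      rw [Finset.disjoint_left]
      intro e heA heB
      rw [hAdef, Finset.mem_image] at heA
      obtain ⟨k, -, rfl⟩ := heA
      rw [hBdef, Finset.mem_filter] at heB
      rcases heB.2 with h | h <;> simp [hxdef, hydef] at h
    have hAcard : A.card = ℓ - 1 := by
      rw [hAdef, Finset.card_image_of_injective _ Sum.inl_injective]
      have : (Finset.univ.filter (fun k : Fin ℓ => k.val ≠ 0))
          = Finset.univ.erase (⟨0, by omega⟩ : Fin ℓ) := by
        ext k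
        simp [Fin.ext_iff]
      rw [this, Finset.card_erase_of_mem (Finset.mem_univ _), Finset.card_univ,
        Fintype.card_fin]
    have hBsub : B ⊆ {x, y} := by
      intro e he
      rw [hBdef, Finset.mem_filter] at he
      rcases he.2 with rfl | rfl <;> simp
    have hxy : x ≠ y := by simp [hxdef, hydef]
    have hBle : B.card ≤ 2 := le_trans (Finset.card_le_card hBsub)
      (le_of_eq (Finset.card_pair hxy))
    have hPcard : P.card = A.card + B.card := by
      rw [hPAB, Finset.card_union_of_disjoint hdisj]
    have hPle : P.card ≤ ℓ + 1 := by omega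
    have hPge : ℓ ≤ P.card := keyge _
    have hPne : P.card ≠ ℓ + 1 := by
      intro h
      have := key (coordVar N m i)
      rw [← hPdef, h, Nat.choose_succ_self_right] at this
      push_cast at this
      exact hℓF (by linear_combination this)
    have hB1 : B.card = 1 := by omega
    by_cases hx : x ∈ S <;> by_cases hy : y ∈ S
    · exfalso
      have : ({x, y} : Finset _) ⊆ B := by
        intro e he
        rw [hBdef, Finset.mem_filter]
        rcases Finset.mem_insert.mp he with rfl | he'
        · exact ⟨hx, Or.inl rfl⟩
        · rw [Finset.mem_singleton] at he'; subst he'; exact ⟨hy, Or.inr rfl⟩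
      have := Finset.card_le_card this
      rw [Finset.card_pair hxy, hB1] at this
      omega
    · exact Or.inl ⟨hx, hy⟩
    · exact Or.inr ⟨hy, hx⟩
    · exfalso
      have : B = ∅ := by
        rw [Finset.eq_empty_iff_forall_notMem]
        intro e he
        rw [hBdef, Finset.mem_filter] at he
        rcases he.2 with rfl | rfl
        · exact hx he.1
        · exact hy he.1
      rw [this, Finset.card_empty] at hB1
      omega
  -- Part (iii)
  · intro j
    by_contra hcon
    push_neg at hcon
    have hsub : S.filter (fun e => subsetPhiElem F N m ℓ Cl e (coordCl N m j) = 1)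
        ⊆ (Finset.univ : Finset (Fin (ℓ - 1))).image
          (fun k' => Sum.inr (Sum.inr (j, k'))) := by
      intro e he
      rw [Finset.mem_filter] at he
      obtain (k | ⟨i, b⟩ | ⟨j', k'⟩) := e
      · rw [eval_inl_coordCl] at he; exact absurd he.2 zero_ne_one
      · exfalso
        rw [eval_lit_coordCl] at he
        by_cases h : ∃ k : Fin 3, Cl j k = (i, b)
        · obtain ⟨k, hk⟩ := h
          exact hcon k (by rw [hk]; exact he.1)
        · rw [if_neg h] at he; exact zero_ne_one he.2
      · rw [eval_gad_coordCl] at he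
        have hjj : j' = j := by
          by_contra h
          rw [if_neg h] at he
          exact zero_ne_one he.2
        subst hjj
        exact Finset.mem_image.mpr ⟨k', Finset.mem_univ _, rfl⟩
    have hle := Finset.card_le_card hsub
    have himg : ((Finset.univ : Finset (Fin (ℓ - 1))).image
        (fun k' => Sum.inr (Sum.inr (j, k')) :
          Fin (ℓ - 1) → Fin ℓ ⊕ ((Fin N × Bool) ⊕ (Fin m × Fin (ℓ - 1))))).card ≤ ℓ - 1 := by
      refine le_trans (Finset.card_image_le) ?_
      rw [Finset.card_univ, Fintype.card_fin]
    have := keyge (coordCl N m j)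
    omega
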